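/- Riccati-type comparison: Let q be a positive real number and C̃ > 0 a constant. Suppose f: (0, ∞) → ℝ is differentiable and satisfies the differential inequality (1/q) f(t)² + f'(t) − q C̃ ≤ 0 for all t > 0, together with lim_{t→0⁺} f(t) = +∞. Then for all t > 0, f(t) ≤ q √C̃ · coth(√C̃ · t) ≤ q (1/t + √C̃). -/

import Mathlib

/-!
The barrier `B_ε(t) = q c coth (c (t - ε))`, `c = √C`, solves the Riccati equation
`B' = q C - B² / q` on `(ε, ∞)` and blows up at `ε⁺`, while `f` stays finite at `ε > 0`. So
`f < B_ε + δ` just right of `ε`, and `f` can never catch up with `B_ε + δ`: at a first contact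
point the Riccati inequality would force `f' < B_ε'`. Letting `δ → 0` and then `ε → 0` gives the
bound; the second inequality is `coth s = 1 + e⁻ˢ / sinh s ≤ 1 + 1 / s`.
-/

open Filter Set Topology

namespace Real

noncomputable def coth (x : ℝ) : ℝ := cosh x / sinh x

theorem hasDerivAt_coth {x : ℝ} (hx : x ≠ 0) : HasDerivAt coth (1 - coth x ^ 2) x := by
  have hsinh : sinh x ≠ 0 := sinh_ne_zero.mpr hx
  refine ((hasDerivAt_cosh x).div (hasDerivAt_sinh x) hsinh).congr_deriv ?_
  rw [coth]
  field_simp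

theorem continuousAt_coth {x : ℝ} (hx : x ≠ 0) : ContinuousAt coth x :=
  (hasDerivAt_coth hx).continuousAt

theorem coth_pos {x : ℝ} (hx : 0 < x) : 0 < coth x :=
  div_pos (cosh_pos x) (sinh_pos_iff.mpr hx)

theorem tendsto_coth_nhdsGT_zero : Tendsto coth (𝓝[>] 0) atTop := by
  have hsinh : Tendsto sinh (𝓝[>] 0) (𝓝[>] 0) := by
    refine tendsto_nhdsWithin_iff.mpr
      ⟨?_, eventually_nhdsWithin_of_forall fun x hx => sinh_pos_iff.mpr hx⟩
    simpa using continuous_sinh.continuousWithinAt.tendsto (x := 0) (s := Ioi 0)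
  have hcosh : Tendsto cosh (𝓝[>] 0) (𝓝 1) := by
    simpa using continuous_cosh.continuousWithinAt.tendsto (x := 0) (s := Ioi 0)
  exact (hcosh.pos_mul_atTop one_pos (tendsto_inv_nhdsGT_zero.comp hsinh)).congr
    fun x => (div_eq_mul_inv _ _).symm

theorem coth_le_inv_add_one {x : ℝ} (hx : 0 < x) : coth x ≤ x⁻¹ + 1 := by
  have hsinh : 0 < sinh x := sinh_pos_iff.mpr hx
  have hexp : exp (-x) / sinh x ≤ 1 / x :=
    div_le_div₀ zero_le_one (exp_le_one_iff.mpr (neg_nonpos.mpr hx.le)) hx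
      (self_le_sinh_iff.mpr hx.le)
  calc coth x = exp (-x) / sinh x + 1 := by
        rw [coth, ← cosh_sub_sinh]; field_simp; ring
    _ ≤ x⁻¹ + 1 := by rw [one_div] at hexp; linarith

end Real

open Real

noncomputable def riccatiBarrier (q c ε t : ℝ) : ℝ := q * c * coth (c * (t - ε))

section RiccatiBarrier

variable {q c ε t : ℝ}

theorem hasDerivAt_riccatiBarrier (hq : q ≠ 0) (hc : c ≠ 0) (ht : t ≠ ε) :
    HasDerivAt (riccatiBarrier q c ε) (q * c ^ 2 - riccatiBarrier q c ε t ^ 2 / q) t := by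
  have harg : HasDerivAt (fun t => c * (t - ε)) c t := by
    simpa using ((hasDerivAt_id t).sub_const ε).const_mul c
  have hcoth := (hasDerivAt_coth (mul_ne_zero hc (sub_ne_zero.mpr ht))).comp t harg
  refine (hcoth.const_mul (q * c)).congr_deriv ?_
  rw [riccatiBarrier]
  field_simp

theorem riccatiBarrier_pos (hq : 0 < q) (hc : 0 < c) (ht : ε < t) : 0 < riccatiBarrier q c ε t :=
  mul_pos (mul_pos hq hc) (coth_pos (mul_pos hc (sub_pos.mpr ht)))

theorem tendsto_riccatiBarrier_nhdsGT (hq : 0 < q) (hc : 0 < c) :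
    Tendsto (riccatiBarrier q c ε) (𝓝[>] ε) atTop := by
  have harg : Tendsto (fun t => c * (t - ε)) (𝓝[>] ε) (𝓝[>] 0) := by
    refine tendsto_nhdsWithin_iff.mpr ⟨?_, eventually_nhdsWithin_of_forall fun t ht =>
      mul_pos hc (sub_pos.mpr ht)⟩
    have hcont : ContinuousAt (fun t => c * (t - ε)) ε := by fun_prop
    simpa using hcont.continuousWithinAt.tendsto
  exact (tendsto_coth_nhdsGT_zero.comp harg).const_mul_atTop (mul_pos hq hc)

theorem continuousAt_riccatiBarrier_shift (hc : c ≠ 0) (ht : t ≠ ε) :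
    ContinuousAt (fun ε => riccatiBarrier q c ε t) ε :=
  continuousAt_const.mul <| ContinuousAt.comp (f := fun ε => c * (t - ε))
    (continuousAt_coth (mul_ne_zero hc (sub_ne_zero.mpr ht))) (by fun_prop)

end RiccatiBarrier

section Comparison

variable {q c ε : ℝ} {f : ℝ → ℝ}

theorem le_riccatiBarrier_of_deriv_le {t₀ : ℝ} (hq : 0 < q) (hc : 0 < c) (hεt₀ : ε < t₀)
    (hdiff : ∀ t ∈ Icc ε t₀, DifferentiableAt ℝ f t)
    (hsub : ∀ t ∈ Ioo ε t₀, deriv f t ≤ q * c ^ 2 - f t ^ 2 / q) :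
    f t₀ ≤ riccatiBarrier q c ε t₀ := by
  refine le_of_forall_pos_le_add fun δ hδ => ?_
  obtain ⟨a, ha, hfa⟩ : ∃ a ∈ Ioo ε t₀, f a ≤ riccatiBarrier q c ε a + δ := by
    have hf : Tendsto f (𝓝[>] ε) (𝓝 (f ε)) :=
      (hdiff ε ⟨le_rfl, hεt₀.le⟩).continuousAt.continuousWithinAt.tendsto
    have hB := (tendsto_riccatiBarrier_nhdsGT (ε := ε) hq hc).atTop_add
      (tendsto_const_nhds (x := δ))
    obtain ⟨a, ⟨hfa, hBa⟩, ha⟩ := ((hf.eventually (eventually_lt_nhds (lt_add_one (f ε)))).and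
      (hB.eventually_ge_atTop (f ε + 1)) |>.and (Ioo_mem_nhdsGT hεt₀)).exists
    exact ⟨a, ha, by linarith⟩
  have hIcc : Icc a t₀ ⊆ Icc ε t₀ := Icc_subset_Icc_left ha.1.le
  refine image_le_of_deriv_right_lt_deriv_boundary' (f' := deriv f)
    (B := fun t => riccatiBarrier q c ε t + δ)
    (B' := fun t => q * c ^ 2 - riccatiBarrier q c ε t ^ 2 / q)
    (fun t ht => (hdiff t (hIcc ht)).continuousAt.continuousWithinAt)
    (fun t ht => (hdiff t (hIcc (Ico_subset_Icc_self ht))).hasDerivAt.hasDerivWithinAt) hfa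
    (fun t ht => ((hasDerivAt_riccatiBarrier hq.ne' hc.ne'
      (ha.1.trans_le ht.1).ne').add_const δ).continuousAt.continuousWithinAt)
    (fun t ht => ((hasDerivAt_riccatiBarrier hq.ne' hc.ne'
      (ha.1.trans_le ht.1).ne').add_const δ).hasDerivWithinAt)
    (fun t ht hft => ?_) ⟨ha.2.le, le_rfl⟩
  have hεt : ε < t := ha.1.trans_le ht.1
  have hBpos := riccatiBarrier_pos hq hc hεt
  have hsq : riccatiBarrier q c ε t ^ 2 / q < f t ^ 2 / q := by
    rw [hft]; gcongr; linarith
  linarith [hsub t ⟨hεt, ht.2⟩]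

theorem le_riccatiBarrier_zero_of_deriv_le {t : ℝ} (hq : 0 < q) (hc : 0 < c) (ht : 0 < t)
    (hdiff : ∀ t, 0 < t → DifferentiableAt ℝ f t)
    (hsub : ∀ t, 0 < t → deriv f t ≤ q * c ^ 2 - f t ^ 2 / q) :
    f t ≤ riccatiBarrier q c 0 t := by
  have hlim : Tendsto (fun ε => riccatiBarrier q c ε t) (𝓝[>] 0) (𝓝 (riccatiBarrier q c 0 t)) :=
    (continuousAt_riccatiBarrier_shift hc.ne' ht.ne').continuousWithinAt.tendsto
  refine ge_of_tendsto hlim ?_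
  filter_upwards [Ioo_mem_nhdsGT ht] with ε hε
  exact le_riccatiBarrier_of_deriv_le hq hc hε.2 (fun s hs => hdiff s (hε.1.trans_le hs.1))
    fun s hs => hsub s (hε.1.trans hs.1)

end Comparison

theorem riccati_comparison_general (q C : ℝ) (hq : 0 < q) (hC : 0 < C) (f : ℝ → ℝ)
    (hdiff : ∀ t, 0 < t → DifferentiableAt ℝ f t)
    (hineq : ∀ t, 0 < t → (1 / q) * f t ^ 2 + deriv f t - q * C ≤ 0) :
    ∀ t, 0 < t →
      f t ≤ q * Real.sqrt C * (Real.cosh (Real.sqrt C * t) / Real.sinh (Real.sqrt C * t)) ∧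
      q * Real.sqrt C * (Real.cosh (Real.sqrt C * t) / Real.sinh (Real.sqrt C * t)) ≤
        q * (1 / t + Real.sqrt C) := by
  intro t ht
  have hc : 0 < √C := sqrt_pos.mpr hC
  have hsub (s : ℝ) (hs : 0 < s) : deriv f s ≤ q * √C ^ 2 - f s ^ 2 / q := by
    rw [sq_sqrt hC.le]
    linarith [hineq s hs, one_div_mul_eq_div q (f s ^ 2)]
  have hbound := le_riccatiBarrier_zero_of_deriv_le hq hc ht hdiff hsub
  refine ⟨by simpa [riccatiBarrier, coth] using hbound, ?_⟩
  calc q * √C * coth (√C * t) ≤ q * √C * ((√C * t)⁻¹ + 1) := by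
        gcongr; exact coth_le_inv_add_one (mul_pos hc ht)
    _ = q * (1 / t + √C) := by field_simp

/-- (Riccati-type comparison) Let `q > 0` and `C̃ > 0`.  If
`f : (0,∞) → ℝ` is differentiable, satisfies the Riccati differential inequality
`(1/q) f(t)² + f'(t) − q C̃ ≤ 0` for all `t > 0`, and `f(t) → +∞` as `t → 0⁺`,
then for all `t > 0`
`f(t) ≤ q √C̃ · coth(√C̃ t) ≤ q (1/t + √C̃)`, where `coth s = cosh s / sinh s`. -/
theorem riccati_comparison (q C : ℝ) (hq : 0 < q) (hC : 0 < C) (f : ℝ → ℝ)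
    (hdiff : ∀ t, 0 < t → DifferentiableAt ℝ f t)
    (hineq : ∀ t, 0 < t → (1 / q) * f t ^ 2 + deriv f t - q * C ≤ 0)
    (hlim : Filter.Tendsto f (nhdsWithin 0 (Set.Ioi 0)) Filter.atTop) :
    ∀ t, 0 < t →
      f t ≤ q * Real.sqrt C * (Real.cosh (Real.sqrt C * t) / Real.sinh (Real.sqrt C * t)) ∧
      q * Real.sqrt C * (Real.cosh (Real.sqrt C * t) / Real.sinh (Real.sqrt C * t)) ≤
        q * (1 / t + Real.sqrt C) :=
  riccati_comparison_general q C hq hC f hdiff hineq
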